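/- Suppose each φ_i is convex with L-Lipschitz gradient, P(w) = (1/n)∑_i φ_i(w) + (λ/2)||w||^2, w* minimizes P, and α_i* = −∇φ_i(w*). Then (1/n)∑_{i=1}^n ||∇φ_i(y) + α_i*||^2 ≤ 2L^2 ||x − y||^2 + 4L (P(x) − P(w*) − (λ/2)||x − w*||^2) for any x, y ∈ R^d. -/

import Mathlib

/-!
Write `B_i(x) = φ_i(x) - φ_i(w*) - ⟪∇φ_i(w*), x - w*⟫` for the Bregman divergence. Since
`∇P(w*) = 0`, i.e. `(1/n) ∑ ∇φ_i(w*) = -λ w*`, the average of the `B_i(x)` is exactly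
`P(x) - P(w*) - (λ/2)‖x - w*‖²`. Each term is then bounded by splitting
`∇φ_i(y) + α_i* = (∇φ_i(y) - ∇φ_i(x)) + (∇φ_i(x) - ∇φ_i(w*))`: the first part is at most
`L‖x - y‖` by smoothness, and the square of the second is at most `2L B_i(x)` by co-coercivity
of gradients of convex `L`-smooth functions.
-/

open scoped RealInnerProductSpace
open Set

section Bregman

variable {E : Type*} [NormedAddCommGroup E] [InnerProductSpace ℝ E] [CompleteSpace E]
  {f : E → ℝ} {L : ℝ}

noncomputable def bregman (f : E → ℝ) (x z : E) : ℝ :=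
  f x - f z - ⟪gradient f z, x - z⟫

@[simp]
theorem bregman_self (f : E → ℝ) (z : E) : bregman f z z = 0 := by
  simp [bregman]

theorem bregman_three_point (f : E → ℝ) (w x z : E) :
    bregman f w z = bregman f x z + bregman f w x + ⟪gradient f x - gradient f z, w - x⟫ := by
  simp only [bregman, inner_sub_left, inner_sub_right]
  ring

theorem DifferentiableAt.hasDerivAt_comp_add_smul {u v : E} {t : ℝ}
    (hf : DifferentiableAt ℝ f (u + t • v)) :
    HasDerivAt (fun s : ℝ => f (u + s • v)) ⟪gradient f (u + t • v), v⟫ t := by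
  have hline : HasDerivAt (fun s : ℝ => u + s • v) v t := by
    simpa using ((hasDerivAt_id t).smul_const v).const_add u
  exact (hasGradientAt_iff_hasFDerivAt.mp hf.hasGradientAt).comp_hasDerivAt t hline

theorem ConvexOn.bregman_nonneg (hconv : ConvexOn ℝ univ f) {z : E}
    (hf : DifferentiableAt ℝ f z) (x : E) : 0 ≤ bregman f x z := by
  have hline : ConvexOn ℝ univ (fun t : ℝ => f (z + t • (x - z))) := by
    have h := hconv.comp_affineMap (AffineMap.lineMap z x)
    rw [preimage_univ] at h
    refine h.congr fun t _ => ?_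
    simp [AffineMap.lineMap_apply, add_comm]
  have hderiv := (show DifferentiableAt ℝ f (z + (0 : ℝ) • (x - z)) by simpa using hf)
    |>.hasDerivAt_comp_add_smul
  have hslope := hline.le_slope_of_hasDerivAt (mem_univ 0) (mem_univ 1) one_pos hderiv
  simp only [slope_def_field, zero_smul, add_zero, one_smul, add_sub_cancel, sub_zero,
    div_one] at hslope
  exact sub_nonneg.mpr (by linarith)

theorem bregman_le_of_lipschitz_gradient (hf : Differentiable ℝ f)
    (hLip : ∀ a b, ‖gradient f a - gradient f b‖ ≤ L * ‖a - b‖) (x z : E) :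
    bregman f x z ≤ L / 2 * ‖x - z‖ ^ 2 := by
  set w := x - z
  let h : ℝ → ℝ := fun t => f (z + t • w) - t * ⟪gradient f z, w⟫ - L / 2 * t ^ 2 * ‖w‖ ^ 2
  have hderiv : ∀ t, HasDerivAt h
      (⟪gradient f (z + t • w), w⟫ - ⟪gradient f z, w⟫ - L * t * ‖w‖ ^ 2) t := by
    intro t
    have hterms := (((hf (z + t • w)).hasDerivAt_comp_add_smul).sub
      ((hasDerivAt_id t).mul_const ⟪gradient f z, w⟫)).sub
      (((hasDerivAt_pow 2 t).const_mul (L / 2)).mul_const (‖w‖ ^ 2))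
    exact hterms.congr_deriv (by push_cast; ring)
  have hanti : AntitoneOn h (Ici 0) := by
    refine antitoneOn_of_hasDerivWithinAt_nonpos (convex_Ici 0)
      (fun t _ => (hderiv t).continuousAt.continuousWithinAt)
      (fun t _ => (hderiv t).hasDerivWithinAt) fun t ht => ?_
    rw [interior_Ici] at ht
    have hgrad : ‖gradient f (z + t • w) - gradient f z‖ ≤ L * t * ‖w‖ := by
      simpa [norm_smul, abs_of_pos (mem_Ioi.mp ht), mul_assoc] using hLip (z + t • w) z
    have hcs := real_inner_le_norm (gradient f (z + t • w) - gradient f z) w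
    rw [inner_sub_left] at hcs
    nlinarith [norm_nonneg w]
  have hends := hanti self_mem_Ici (zero_le_one' ℝ) (zero_le_one' ℝ)
  simp only [h, w, zero_smul, add_zero, one_smul, add_sub_cancel, zero_mul, sub_zero, one_mul,
    one_pow, ne_eq, OfNat.ofNat_ne_zero, not_false_eq_true, zero_pow, mul_zero] at hends
  unfold bregman
  linarith


theorem sq_norm_gradient_sub_le_bregman (hconv : ConvexOn ℝ univ f) (hf : Differentiable ℝ f)
    (hLip : ∀ a b, ‖gradient f a - gradient f b‖ ≤ L * ‖a - b‖) (x z : E) :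
    ‖gradient f x - gradient f z‖ ^ 2 ≤ 2 * L * bregman f x z := by
  rcases le_or_gt L 0 with hL | hL
  · -- the gradient is constant, so `f` is affine and both sides vanish
    have hconst : gradient f x = gradient f z := by
      have hzero := (hLip x z).trans (mul_nonpos_of_nonpos_of_nonneg hL (norm_nonneg _))
      exact sub_eq_zero.mp (norm_le_zero_iff.mp hzero)
    have hsum := bregman_three_point f z x z
    rw [hconst, sub_self, inner_zero_left, bregman_self] at hsum
    have hxz := hconv.bregman_nonneg (hf z) x
    have hzx := hconv.bregman_nonneg (hf x) z
    rw [hconst, sub_self, norm_zero, (by linarith : bregman f x z = 0)]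
    simp
  · -- test the first-order condition at the gradient step `w` from `x`
    set g := gradient f x - gradient f z
    set w := x - L⁻¹ • g
    have hsplit := bregman_three_point f w x z
    have hstep : w - x = -(L⁻¹ • g) := by simp [w]
    have hinner : ⟪g, w - x⟫ = -L⁻¹ * ‖g‖ ^ 2 := by
      rw [hstep, inner_neg_right, real_inner_smul_right, real_inner_self_eq_norm_sq]; ring
    have hnorm : ‖w - x‖ ^ 2 = L⁻¹ ^ 2 * ‖g‖ ^ 2 := by
      rw [hstep, norm_neg, norm_smul, mul_pow, Real.norm_eq_abs, sq_abs]
    have hdescent := bregman_le_of_lipschitz_gradient hf hLip w x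
    have hfirst := hconv.bregman_nonneg (hf z) w
    rw [hnorm] at hdescent
    rw [hinner] at hsplit
    have hkey : L⁻¹ * ‖g‖ ^ 2 ≤ 2 * bregman f x z := by
      have : L / 2 * (L⁻¹ ^ 2 * ‖g‖ ^ 2) = L⁻¹ / 2 * ‖g‖ ^ 2 := by field_simp
      linarith
    calc ‖g‖ ^ 2 = L * (L⁻¹ * ‖g‖ ^ 2) := by field_simp
      _ ≤ L * (2 * bregman f x z) := by gcongr
      _ = 2 * L * bregman f x z := by ring

theorem sq_norm_gradient_sub_le (hconv : ConvexOn ℝ univ f) (hf : Differentiable ℝ f)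
    (hLip : ∀ a b, ‖gradient f a - gradient f b‖ ≤ L * ‖a - b‖) (x y z : E) :
    ‖gradient f y - gradient f z‖ ^ 2 ≤ 2 * L ^ 2 * ‖x - y‖ ^ 2 + 4 * L * bregman f x z := by
  have hyx : ‖gradient f y - gradient f x‖ ≤ L * ‖x - y‖ := norm_sub_rev x y ▸ hLip y x
  have hyx_sq : ‖gradient f y - gradient f x‖ ^ 2 ≤ L ^ 2 * ‖x - y‖ ^ 2 := by
    rw [← mul_pow]; exact pow_le_pow_left₀ (norm_nonneg _) hyx 2
  have hxz_sq := sq_norm_gradient_sub_le_bregman hconv hf hLip x z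
  calc ‖gradient f y - gradient f z‖ ^ 2
      = ‖(gradient f y - gradient f x) + (gradient f x - gradient f z)‖ ^ 2 := by
        rw [sub_add_sub_cancel]
    _ ≤ (‖gradient f y - gradient f x‖ + ‖gradient f x - gradient f z‖) ^ 2 := by
        gcongr; exact norm_add_le _ _
    _ ≤ 2 * (‖gradient f y - gradient f x‖ ^ 2 + ‖gradient f x - gradient f z‖ ^ 2) :=
        add_sq_le
    _ ≤ 2 * L ^ 2 * ‖x - y‖ ^ 2 + 4 * L * bregman f x z := by linarith

end Bregman

section RegularizedSum

variable {E : Type*} [NormedAddCommGroup E] [InnerProductSpace ℝ E] [CompleteSpace E]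
  {ι : Type*} [Fintype ι] {φ : ι → E → ℝ} {c lam : ℝ} {P : E → ℝ} {wstar : E}

theorem sum_inner_gradient_add_inner_eq_zero_of_minimizer (hdiff : ∀ i, Differentiable ℝ (φ i))
    (hP : ∀ w, P w = c * ∑ i, φ i w + lam / 2 * ‖w‖ ^ 2) (hmin : ∀ w, P wstar ≤ P w) (v : E) :
    c * ∑ i, ⟪gradient (φ i) wstar, v⟫ + lam * ⟪wstar, v⟫ = 0 := by
  have hline : HasDerivAt (fun t : ℝ => P (wstar + t • v))
      (c * ∑ i, ⟪gradient (φ i) (wstar + (0 : ℝ) • v), v⟫ +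
        lam / 2 * (2 * ⟪wstar + (0 : ℝ) • v, v⟫)) 0 := by
    simp only [hP]
    have hpath : HasDerivAt (fun t : ℝ => wstar + t • v) v 0 := by
      simpa using ((hasDerivAt_id (0 : ℝ)).smul_const v).const_add wstar
    exact ((HasDerivAt.fun_sum fun i _ => ((hdiff i) _).hasDerivAt_comp_add_smul).const_mul c).add
      (hpath.norm_sq.const_mul (lam / 2))
  have hlocal : IsLocalMin (fun t : ℝ => P (wstar + t • v)) 0 :=
    Filter.Eventually.of_forall fun t => by simpa using hmin (wstar + t • v)
  have hcrit := hlocal.hasDerivAt_eq_zero hline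
  simp only [zero_smul, add_zero] at hcrit
  linarith

theorem sum_bregman_eq_of_minimizer (hdiff : ∀ i, Differentiable ℝ (φ i))
    (hP : ∀ w, P w = c * ∑ i, φ i w + lam / 2 * ‖w‖ ^ 2) (hmin : ∀ w, P wstar ≤ P w) (x : E) :
    c * ∑ i, bregman (φ i) x wstar = P x - P wstar - lam / 2 * ‖x - wstar‖ ^ 2 := by
  have hopt := sum_inner_gradient_add_inner_eq_zero_of_minimizer hdiff hP hmin (x - wstar)
  have hnorm : ‖x‖ ^ 2 = ‖wstar‖ ^ 2 + 2 * ⟪wstar, x - wstar⟫ + ‖x - wstar‖ ^ 2 := by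
    rw [← norm_add_sq_real, add_sub_cancel]
  simp only [bregman, Finset.sum_sub_distrib] at hopt ⊢
  rw [hP x, hP wstar, hnorm]
  linarith

end RegularizedSum

theorem stmt_6_general {d n : ℕ} (hn : 0 < n) (φ : Fin n → EuclideanSpace ℝ (Fin d) → ℝ)
    (L lam : ℝ)
    (hconv : ∀ i, ConvexOn ℝ Set.univ (φ i))
    (hdiff : ∀ i, Differentiable ℝ (φ i))
    (hLip : ∀ i, ∀ x y, ‖gradient (φ i) x - gradient (φ i) y‖ ≤ L * ‖x - y‖)
    (P : EuclideanSpace ℝ (Fin d) → ℝ)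
    (hP : ∀ w, P w = (1 / (n : ℝ)) * ∑ i, φ i w + lam / 2 * ‖w‖ ^ 2)
    (wstar : EuclideanSpace ℝ (Fin d)) (hmin : ∀ w, P wstar ≤ P w)
    (αstar : Fin n → EuclideanSpace ℝ (Fin d))
    (hα : ∀ i, αstar i = -gradient (φ i) wstar)
    (x y : EuclideanSpace ℝ (Fin d)) :
    (1 / (n : ℝ)) * ∑ i, ‖gradient (φ i) y + αstar i‖ ^ 2 ≤
      2 * L ^ 2 * ‖x - y‖ ^ 2 +
        4 * L * (P x - P wstar - lam / 2 * ‖x - wstar‖ ^ 2) := by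
  have hn' : (n : ℝ) ≠ 0 := Nat.cast_ne_zero.mpr hn.ne'
  simp only [hα, ← sub_eq_add_neg]
  calc (1 / (n : ℝ)) * ∑ i, ‖gradient (φ i) y - gradient (φ i) wstar‖ ^ 2
      ≤ (1 / (n : ℝ)) * ∑ i, (2 * L ^ 2 * ‖x - y‖ ^ 2 + 4 * L * bregman (φ i) x wstar) := by
        gcongr with i
        exact sq_norm_gradient_sub_le (hconv i) (hdiff i) (hLip i) x y wstar
    _ = 2 * L ^ 2 * ‖x - y‖ ^ 2 + 4 * L * ((1 / (n : ℝ)) * ∑ i, bregman (φ i) x wstar) := by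
        rw [Finset.sum_add_distrib, Finset.sum_const, Finset.card_univ, Fintype.card_fin,
          nsmul_eq_mul, ← Finset.mul_sum]
        field_simp
    _ = 2 * L ^ 2 * ‖x - y‖ ^ 2 + 4 * L * (P x - P wstar - lam / 2 * ‖x - wstar‖ ^ 2) := by
        rw [sum_bregman_eq_of_minimizer hdiff hP hmin x]

theorem stmt_6 {d n : ℕ} (hn : 0 < n) (φ : Fin n → EuclideanSpace ℝ (Fin d) → ℝ)
    (L lam : ℝ) (hlam : 0 < lam)
    (hconv : ∀ i, ConvexOn ℝ Set.univ (φ i))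
    (hdiff : ∀ i, Differentiable ℝ (φ i))
    (hLip : ∀ i, ∀ x y, ‖gradient (φ i) x - gradient (φ i) y‖ ≤ L * ‖x - y‖)
    (P : EuclideanSpace ℝ (Fin d) → ℝ)
    (hP : ∀ w, P w = (1 / (n : ℝ)) * ∑ i, φ i w + lam / 2 * ‖w‖ ^ 2)
    (wstar : EuclideanSpace ℝ (Fin d)) (hmin : ∀ w, P wstar ≤ P w)
    (αstar : Fin n → EuclideanSpace ℝ (Fin d))
    (hα : ∀ i, αstar i = -gradient (φ i) wstar)
    (x y : EuclideanSpace ℝ (Fin d)) :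
    (1 / (n : ℝ)) * ∑ i, ‖gradient (φ i) y + αstar i‖ ^ 2 ≤
      2 * L ^ 2 * ‖x - y‖ ^ 2 +
        4 * L * (P x - P wstar - lam / 2 * ‖x - wstar‖ ^ 2) :=
  stmt_6_general hn φ L lam hconv hdiff hLip P hP wstar hmin αstar hα x y
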